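/- Let B : ℝ^d → ℝ^k be a linear map with rows b_1, …, b_k ∈ ℝ^d, i.e. (B e)_m = ⟨b_m, e⟩ for all e ∈ ℝ^d and all m. Then for every 1 ≤ p < ∞ the p-nuclear norm of B satisfies (Σ_{m=1}^k ‖b_m‖^p)^{1/p} ≤ ν_p(B) ≤ Σ_{m=1}^k ‖b_m‖. -/

import Mathlib

open Finset
open scoped RealInnerProductSpace

/-- The ℓᵖ norm on `ℝᵏ`, for `1 ≤ p < ∞`. -/
noncomputable def lpNorm (k : ℕ) (p : ℝ) (z : Fin k → ℝ) : ℝ :=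
    (∑ j, |z j| ^ p) ^ (1 / p)

/-- The `p`-nuclear norm of a linear map `A : ℝ^d → ℝ^k`:
the infimum of `∑ i ‖z i‖_p ‖v i‖` over all finite decompositions
`A e = ∑ i ⟪v i, e⟫ • z i`. -/
noncomputable def nuclearNorm (d k : ℕ) (p : ℝ)
    (A : EuclideanSpace ℝ (Fin d) →ₗ[ℝ] (Fin k → ℝ)) : ℝ :=
  sInf { s : ℝ | ∃ (l : ℕ) (z : Fin l → Fin k → ℝ)
      (v : Fin l → EuclideanSpace ℝ (Fin d)),
    (∀ e, A e = ∑ i, ⟪v i, e⟫ • z i) ∧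
    s = ∑ i, lpNorm k p (z i) * ‖v i‖ }

/-!
The upper bound is the cost of the decomposition of `B` along its rows, `B e = ∑ m, ⟪b m, e⟫ • e_m`,
since each unit vector `e_m` has `ℓᵖ` norm one. For the lower bound, a decomposition
`B e = ∑ i, ⟪v i, e⟫ • z i` writes the family of rows as `b = ∑ i, (z i m • v i)_m` in
`ℓᵖ(Fin k; ℝ^d)`, where the `i`-th term has norm `‖z i‖_p ‖v i‖`; the triangle inequality there
bounds `(∑ m, ‖b m‖ ^ p) ^ (1 / p)` by the cost of the decomposition.
-/

lemma lpNorm_single_one (k : ℕ) (p : ℝ) (i : Fin k) : lpNorm k p (Pi.single i 1) = 1 := by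
  rcases eq_or_ne p 0 with rfl | hp
  · simp [lpNorm]
  · rw [lpNorm, Finset.sum_eq_single i (fun j _ hj => by simp [hj, hp]) (by simp)]
    simp

lemma lpNorm_nonneg (k : ℕ) (p : ℝ) (z : Fin k → ℝ) : 0 ≤ lpNorm k p z := by
  unfold lpNorm
  positivity

lemma norm_toLp_smul_eq_lpNorm_mul {E : Type*} [SeminormedAddCommGroup E] [NormedSpace ℝ E]
    {k : ℕ} {p : ℝ} (hp : 0 < p) (z : Fin k → ℝ) (v : E) :
    ‖WithLp.toLp (ENNReal.ofReal p) (fun m => z m • v)‖ = lpNorm k p z * ‖v‖ := by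
  have hp' : 0 < (ENNReal.ofReal p).toReal := by rwa [ENNReal.toReal_ofReal hp.le]
  rw [PiLp.norm_eq_sum hp', ENNReal.toReal_ofReal hp.le, lpNorm]
  simp only [norm_smul, Real.norm_eq_abs]
  simp_rw [Real.mul_rpow (abs_nonneg _) (norm_nonneg v), ← Finset.sum_mul]
  rw [Real.mul_rpow (by positivity) (by positivity), ← Real.rpow_mul (norm_nonneg v),
    mul_one_div_cancel hp.ne', Real.rpow_one]

section Rows

variable {E : Type*} [NormedAddCommGroup E] [InnerProductSpace ℝ E] {k : ℕ}
  {A : E → Fin k → ℝ} {b : Fin k → E}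

lemma eq_sum_inner_smul_single_of_rows (hb : ∀ e m, A e m = ⟪b m, e⟫) (e : E) :
    A e = ∑ m, ⟪b m, e⟫ • Pi.single m 1 := by
  ext m
  simp [hb, Pi.single_apply]

lemma row_eq_sum_smul (hb : ∀ e m, A e m = ⟪b m, e⟫) {l : ℕ} {z : Fin l → Fin k → ℝ}
    {v : Fin l → E} (hA : ∀ e, A e = ∑ i, ⟪v i, e⟫ • z i) (m : Fin k) :
    b m = ∑ i, z i m • v i := by
  refine ext_inner_right ℝ fun e => ?_
  rw [← hb, hA, sum_inner]
  simp [real_inner_smul_left, mul_comm]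

lemma rpow_sum_norm_rows_le (hb : ∀ e m, A e m = ⟪b m, e⟫) {p : ℝ} (hp : 1 ≤ p) {l : ℕ}
    {z : Fin l → Fin k → ℝ} {v : Fin l → E} (hA : ∀ e, A e = ∑ i, ⟪v i, e⟫ • z i) :
    (∑ m, ‖b m‖ ^ p) ^ (1 / p) ≤ ∑ i, lpNorm k p (z i) * ‖v i‖ := by
  have hp0 : 0 < p := zero_lt_one.trans_le hp
  have : Fact (1 ≤ ENNReal.ofReal p) := ⟨by simpa using ENNReal.ofReal_le_ofReal hp⟩
  have hp' : 0 < (ENNReal.ofReal p).toReal := by rwa [ENNReal.toReal_ofReal hp0.le]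
  calc (∑ m, ‖b m‖ ^ p) ^ (1 / p) = ‖WithLp.toLp (ENNReal.ofReal p) b‖ := by
        rw [PiLp.norm_eq_sum hp', ENNReal.toReal_ofReal hp0.le]
    _ = ‖∑ i, WithLp.toLp (ENNReal.ofReal p) (fun m => z i m • v i)‖ := by
        rw [← WithLp.toLp_sum]
        congr 2
        ext m
        simp [row_eq_sum_smul hb hA m]
    _ ≤ ∑ i, lpNorm k p (z i) * ‖v i‖ :=
        (norm_sum_le _ _).trans_eq (by simp only [norm_toLp_smul_eq_lpNorm_mul hp0])

end Rows

section NuclearNorm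

variable {d k : ℕ} {p : ℝ} {A : EuclideanSpace ℝ (Fin d) →ₗ[ℝ] (Fin k → ℝ)}

lemma nuclearNorm_le {l : ℕ} {z : Fin l → Fin k → ℝ} {v : Fin l → EuclideanSpace ℝ (Fin d)}
    (hA : ∀ e, A e = ∑ i, ⟪v i, e⟫ • z i) :
    nuclearNorm d k p A ≤ ∑ i, lpNorm k p (z i) * ‖v i‖ := by
  refine csInf_le ⟨0, ?_⟩ ⟨l, z, v, hA, rfl⟩
  rintro _ ⟨l, z, v, -, rfl⟩
  exact Finset.sum_nonneg fun i _ => mul_nonneg (lpNorm_nonneg k p (z i)) (norm_nonneg _)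

lemma le_nuclearNorm {c : ℝ} (hne : ∃ (l : ℕ) (z : Fin l → Fin k → ℝ)
      (v : Fin l → EuclideanSpace ℝ (Fin d)), ∀ e, A e = ∑ i, ⟪v i, e⟫ • z i)
    (h : ∀ (l : ℕ) (z : Fin l → Fin k → ℝ) (v : Fin l → EuclideanSpace ℝ (Fin d)),
      (∀ e, A e = ∑ i, ⟪v i, e⟫ • z i) → c ≤ ∑ i, lpNorm k p (z i) * ‖v i‖) :
    c ≤ nuclearNorm d k p A := by
  obtain ⟨l, z, v, hA⟩ := hne
  refine le_csInf ⟨_, l, z, v, hA, rfl⟩ ?_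
  rintro _ ⟨l, z, v, hA, rfl⟩
  exact h l z v hA

end NuclearNorm

theorem nuclearNorm_rows_bounds_general (d k : ℕ)
    (p : ℝ) (hp : 1 ≤ p)
    (B : EuclideanSpace ℝ (Fin d) →ₗ[ℝ] (Fin k → ℝ))
    (b : Fin k → EuclideanSpace ℝ (Fin d))
    (hB : ∀ (e : EuclideanSpace ℝ (Fin d)) (m : Fin k), B e m = ⟪b m, e⟫) :
    (∑ m, ‖b m‖ ^ p) ^ (1 / p) ≤ nuclearNorm d k p B ∧
      nuclearNorm d k p B ≤ ∑ m, ‖b m‖ := by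
  have hrows := eq_sum_inner_smul_single_of_rows hB
  refine ⟨le_nuclearNorm ⟨k, _, b, hrows⟩ fun _ _ _ hA => rpow_sum_norm_rows_le hB hp hA, ?_⟩
  simpa only [lpNorm_single_one, one_mul] using nuclearNorm_le (p := p) hrows

/-- If `B : ℝ^d → ℝ^k` is the linear map with rows
`b_1, …, b_k`, then `(∑ m ‖b m‖^p)^(1/p) ≤ ν_p(B) ≤ ∑ m ‖b m‖`
for every `1 ≤ p < ∞`. -/
theorem nuclearNorm_rows_bounds (d k : ℕ) (hd : 1 ≤ d) (hk : 1 ≤ k)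
    (p : ℝ) (hp : 1 ≤ p)
    (B : EuclideanSpace ℝ (Fin d) →ₗ[ℝ] (Fin k → ℝ))
    (b : Fin k → EuclideanSpace ℝ (Fin d))
    (hB : ∀ (e : EuclideanSpace ℝ (Fin d)) (m : Fin k), B e m = ⟪b m, e⟫) :
    (∑ m, ‖b m‖ ^ p) ^ (1 / p) ≤ nuclearNorm d k p B ∧
      nuclearNorm d k p B ≤ ∑ m, ‖b m‖ :=
  nuclearNorm_rows_bounds_general d k p hp B b hB
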